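/- Let F be an algebraically closed field of characteristic 2, let m ≥ 1, and let λ = (λ_1, …, λ_{2m+1}) ∈ F^{2m+1}. Then the set of maps { g ↦ ψ(g^{[2]}) − [g, ψ(g)] : ψ a derivation of h_m } is exactly the F-linear span of the maps λ_{2m+1}·ρ_{2m+1} and ρ_1, …, ρ_{2m}, where ρ_i is defined by ρ_i(Σ_{k=1}^{2m+1} a_k e_k) = a_i² e_{2m+1}. In particular this set is a subspace of dimension 2m + 1 if λ_{2m+1} ≠ 0 and of dimension 2m if λ_{2m+1} = 0. -/

import Mathlib

/-!
Write `T ψ = ind1 F P ψ : g ↦ ψ (g^{[2]}) - ⁅g, ψ g⁆`. In characteristic `2`, `T ψ` is additive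
(its defect `ψ ⁅u, v⁆ - ⁅u, ψ v⁆ - ⁅v, ψ u⁆ = 2 ⁅ψ u, v⁆` vanishes by the Leibniz rule) and
`T ψ (a g) = a² T ψ g`, so `T ψ = Σ_i c_i ρ_i` where `T ψ e_i = c_i z`. Every derivation maps
`z = ⁅e_1, e_{m+1}⁆` to some `μ z`, and `c_{2m+1} = λ_{2m+1} μ` because `z` is central; so `T ψ`
lies in the span. Conversely the derivations `e_j ↦ e_{m+j}` and `e_{m+j} ↦ e_j` give `-ρ_j`
and `ρ_{m+j}`, and the projection onto `span (e_{m+1}, …, e_{2m+1})` is a derivation giving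
`Σ_i λ_i ρ_i`. The `ρ_i` are linearly independent, which yields the dimensions.
-/

open Module Submodule LieDerivation

theorem Fin.setOf_val_lt_and_eq_eq_range_castSucc {α : Type*} {n : ℕ} (v : Fin (n + 1) → α) :
    {f | ∃ i : Fin (n + 1), (i : ℕ) < n ∧ f = v i} = Set.range (v ∘ Fin.castSucc) := by
  ext f
  constructor
  · rintro ⟨i, hi, rfl⟩
    exact ⟨⟨i, hi⟩, rfl⟩
  · rintro ⟨i, rfl⟩
    exact ⟨i.castSucc, i.isLt, rfl⟩

theorem LinearIndependent.finrank_span_insert_smul_last {K V : Type*} [DivisionRing K]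
    [AddCommGroup V] [Module K V] [DecidableEq K] {n : ℕ} {v : Fin (n + 1) → V}
    (hv : LinearIndependent K v) (c : K) :
    finrank K (span K (insert (c • v (Fin.last n)) (Set.range (v ∘ Fin.castSucc)))) =
      if c = 0 then n else n + 1 := by
  split_ifs with hc
  · rw [hc, zero_smul, span_insert_zero,
      finrank_span_eq_card (hv.comp _ (Fin.castSucc_injective _)), Fintype.card_fin]
  · have hrange : insert (v (Fin.last n)) (Set.range (v ∘ Fin.castSucc)) = Set.range v := by
      rw [← Fin.range_snoc]; exact congrArg Set.range (Fin.snoc_init_self v)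
    rw [span_insert, span_singleton_smul_eq (IsUnit.mk0 c hc), ← span_insert, hrange,
      finrank_span_eq_card hv, Fintype.card_fin]

theorem Module.Basis.eq_sum_repr_sq_smul {R M N ι : Type*} [CommRing R] [AddCommGroup M]
    [Module R M] [AddCommGroup N] [Module R N] [Fintype ι] (b : Basis ι R M) {f : M → N}
    (hadd : ∀ x y, f (x + y) = f x + f y) (hsmul : ∀ (a : R) x, f (a • x) = a ^ 2 • f x)
    (x : M) : f x = ∑ i, b.repr x i ^ 2 • f (b i) := by
  conv_lhs => rw [← b.sum_repr x]
  rw [← AddMonoidHom.mk'_apply f hadd, map_sum]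
  exact Finset.sum_congr rfl fun i _ => hsmul _ _

namespace LieDerivation

variable {R L : Type*} [CommRing R] [LieRing L] [LieAlgebra R L]

variable (R) in
def ind1 (P : L → L) : LieDerivation R L L →ₗ[R] (L → L) where
  toFun ψ g := ψ (P g) - ⁅g, ψ g⁆
  map_add' ψ φ := by
    funext g
    simp only [add_apply, lie_add, Pi.add_apply]
    abel
  map_smul' c ψ := by
    funext g
    simp only [smul_apply, lie_smul, RingHom.id_apply, Pi.smul_apply, smul_sub]

variable (R) in
@[simp]
theorem ind1_apply (P : L → L) (ψ : LieDerivation R L L) (g : L) :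
    ind1 R P ψ g = ψ (P g) - ⁅g, ψ g⁆ := rfl

theorem ind1_apply_add [CharP R 2] {P : L → L} (hP : ∀ u v, P (u + v) = P u + P v + ⁅u, v⁆)
    (ψ : LieDerivation R L L) (u v : L) :
    ind1 R P ψ (u + v) = ind1 R P ψ u + ind1 R P ψ v := by
  have htwo : ⁅ψ u, v⁆ + ⁅ψ u, v⁆ = 0 := by
    rw [← two_smul R, CharTwo.two_eq_zero, zero_smul]
  simp only [ind1_apply, hP, map_add, apply_lie_eq_add, lie_add, add_lie]
  rw [← lie_skew v (ψ u)]
  linear_combination (norm := abel_nf) htwo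

theorem ind1_apply_smul {P : L → L} (hP : ∀ (a : R) u, P (a • u) = a ^ 2 • P u)
    (ψ : LieDerivation R L L) (a : R) (u : L) :
    ind1 R P ψ (a • u) = a ^ 2 • ind1 R P ψ u := by
  simp only [ind1_apply, hP, map_smul, smul_lie, lie_smul, smul_smul, smul_sub, sq]

end LieDerivation

namespace Heisenberg

variable {R L : Type*} [CommRing R] [LieRing L] [LieAlgebra R L] {m : ℕ}

/- The paper's `e_j`, `e_{m+j}`, `e_{2m+1}` (for `1 ≤ j ≤ m`) are `b (xIdx j)`, `b (yIdx j)` and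
`b (Fin.last (2 * m))`, with `j : Fin m` counted from `0`. -/

def xIdx (j : Fin m) : Fin (2 * m + 1) := j.castLE (by omega)

def yIdx (j : Fin m) : Fin (2 * m + 1) := (j.natAdd m).castLE (by omega)

@[simp] theorem val_xIdx (j : Fin m) : (xIdx j : ℕ) = j := rfl

@[simp] theorem val_yIdx (j : Fin m) : (yIdx j : ℕ) = m + j := rfl

@[simp] theorem xIdx_inj {j k : Fin m} : xIdx j = xIdx k ↔ j = k := by
  simp [xIdx, Fin.ext_iff]

@[simp] theorem yIdx_inj {j k : Fin m} : yIdx j = yIdx k ↔ j = k := by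
  simp [yIdx, Fin.ext_iff]

@[simp] theorem xIdx_ne_yIdx (j k : Fin m) : xIdx j ≠ yIdx k := by
  simp [xIdx, yIdx, Fin.ext_iff]; omega

@[simp] theorem xIdx_ne_last (j : Fin m) : xIdx j ≠ Fin.last (2 * m) := by
  simp [xIdx, Fin.ext_iff]; omega

@[simp] theorem yIdx_ne_last (j : Fin m) : yIdx j ≠ Fin.last (2 * m) := by
  simp [yIdx, Fin.ext_iff]; omega

theorem idx_cases (i : Fin (2 * m + 1)) :
    (∃ j, i = xIdx j) ∨ (∃ j, i = yIdx j) ∨ i = Fin.last (2 * m) := by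
  obtain ⟨i, hi⟩ := i
  by_cases h₁ : i < m
  · exact .inl ⟨⟨i, h₁⟩, rfl⟩
  by_cases h₂ : i < 2 * m
  · exact .inr <| .inl ⟨⟨i - m, by omega⟩, by simp [yIdx]; omega⟩
  · exact .inr <| .inr <| by simp [Fin.ext_iff]; omega

def IsHeisenbergBasis (b : Basis (Fin (2 * m + 1)) R L) : Prop :=
  ∀ i j : Fin (2 * m + 1), ⁅b i, b j⁆ =
    if (j : ℕ) = (i : ℕ) + m ∧ (i : ℕ) < m then b (Fin.last (2 * m))
    else if (i : ℕ) = (j : ℕ) + m ∧ (j : ℕ) < m then - b (Fin.last (2 * m))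
    else 0

variable (b : Basis (Fin (2 * m + 1)) R L)

noncomputable def form : LinearMap.BilinForm R L :=
  ∑ j : Fin m, ((LinearMap.mul R R).compl₁₂ (b.coord (xIdx j)) (b.coord (yIdx j)) -
    (LinearMap.mul R R).compl₁₂ (b.coord (yIdx j)) (b.coord (xIdx j)))

theorem form_apply (x y : L) :
    form b x y = ∑ j : Fin m,
      (b.repr x (xIdx j) * b.repr y (yIdx j) - b.repr x (yIdx j) * b.repr y (xIdx j)) := by
  simp [form, LinearMap.sum_apply]

theorem form_swap (x y : L) : form b y x = - form b x y := by
  simp only [form_apply, ← Finset.sum_neg_distrib]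
  exact Finset.sum_congr rfl fun j _ => by ring

@[simp] theorem form_basis_xIdx (x : L) (j : Fin m) :
    form b x (b (xIdx j)) = - b.repr x (yIdx j) := by
  simp [form_apply, Finsupp.single_apply]

@[simp] theorem form_basis_yIdx (x : L) (j : Fin m) :
    form b x (b (yIdx j)) = b.repr x (xIdx j) := by
  simp [form_apply, Finsupp.single_apply]

@[simp] theorem form_basis_last (x : L) : form b x (b (Fin.last (2 * m))) = 0 := by
  simp [form_apply]

@[simp] theorem form_basis_xIdx_left (y : L) (j : Fin m) :
    form b (b (xIdx j)) y = b.repr y (yIdx j) := by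
  rw [form_swap, form_basis_xIdx, neg_neg]

@[simp] theorem form_basis_yIdx_left (y : L) (j : Fin m) :
    form b (b (yIdx j)) y = - b.repr y (xIdx j) := by
  rw [form_swap, form_basis_yIdx]

@[simp] theorem form_basis_last_left (y : L) : form b (b (Fin.last (2 * m))) y = 0 := by
  rw [form_swap, form_basis_last, neg_zero]

noncomputable def quad (lam : Fin (2 * m + 1) → R) (g : L) : R :=
  ∑ i, b.repr g i ^ 2 * lam i + ∑ j : Fin m, b.repr g (xIdx j) * b.repr g (yIdx j)

theorem quad_add [CharP R 2] (lam : Fin (2 * m + 1) → R) (u v : L) :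
    quad b lam (u + v) = quad b lam u + quad b lam v + form b u v := by
  have hsq : ∑ i, b.repr (u + v) i ^ 2 * lam i =
      ∑ i, b.repr u i ^ 2 * lam i + ∑ i, b.repr v i ^ 2 * lam i := by
    simp only [map_add, Finsupp.add_apply, CharTwo.add_sq, add_mul, Finset.sum_add_distrib]
  have hcross : ∑ j : Fin m, b.repr (u + v) (xIdx j) * b.repr (u + v) (yIdx j) =
      ∑ j : Fin m, b.repr u (xIdx j) * b.repr u (yIdx j) +
        ∑ j : Fin m, b.repr v (xIdx j) * b.repr v (yIdx j) + form b u v := by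
    simp only [form_apply, ← Finset.sum_add_distrib]
    refine Finset.sum_congr rfl fun j _ => ?_
    simp only [map_add, Finsupp.add_apply]
    linear_combination b.repr u (yIdx j) * b.repr v (xIdx j) * CharTwo.two_eq_zero (R := R)
  rw [quad, hsq, hcross, quad, quad]
  ring

theorem quad_smul (lam : Fin (2 * m + 1) → R) (a : R) (u : L) :
    quad b lam (a • u) = a ^ 2 * quad b lam u := by
  simp only [quad, map_smul, Finsupp.smul_apply, smul_eq_mul, mul_add, Finset.mul_sum]
  congr 1 <;> exact Finset.sum_congr rfl fun _ _ => by ring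

theorem quad_basis (lam : Fin (2 * m + 1) → R) (i : Fin (2 * m + 1)) :
    quad b lam (b i) = lam i := by
  rcases idx_cases i with ⟨j, rfl⟩ | ⟨j, rfl⟩ | rfl <;>
    simp [quad, Finsupp.single_apply, eq_comm]

noncomputable def twoMap (lam : Fin (2 * m + 1) → R) (g : L) : L :=
  quad b lam g • b (Fin.last (2 * m))

theorem twoMap_smul (lam : Fin (2 * m + 1) → R) (a : R) (u : L) :
    twoMap b lam (a • u) = a ^ 2 • twoMap b lam u := by
  rw [twoMap, twoMap, quad_smul, mul_smul]

noncomputable def rho (i : Fin (2 * m + 1)) (g : L) : L := b.repr g i ^ 2 • b (Fin.last (2 * m))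

theorem linearIndependent_rho [Nontrivial R] : LinearIndependent R (rho b) := by
  refine Fintype.linearIndependent_iff.mpr fun c hc i => ?_
  have := congrArg (fun f : L → L => b.repr (f (b i)) (Fin.last (2 * m))) hc
  simpa [rho, Finset.sum_apply, Finsupp.single_apply] using this

variable {b} (hb : IsHeisenbergBasis b)
include hb

theorem lie_eq_form_smul (x y : L) : ⁅x, y⁆ = form b x y • b (Fin.last (2 * m)) := by
  suffices (LieModule.toEnd R L L : L →ₗ[R] Module.End R L) =
      (form b).compr₂ (LinearMap.toSpanSingleton R L (b (Fin.last (2 * m)))) from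
    congrArg (fun B : L →ₗ[R] Module.End R L => B x y) this
  refine LinearMap.ext_basis b b fun i k => ?_
  simp only [LieHom.coe_toLinearMap, LieModule.toEnd_apply_apply, LinearMap.compr₂_apply,
    LinearMap.toSpanSingleton_apply]
  rcases idx_cases k with ⟨j, rfl⟩ | ⟨j, rfl⟩ | rfl
  all_goals
    rw [hb]
    simp only [form_basis_xIdx, form_basis_yIdx, form_basis_last, Basis.repr_self]
    split_ifs <;> simp_all [Finsupp.single_apply, Fin.ext_iff] <;> omega

theorem lie_basis_xIdx_yIdx (j : Fin m) : ⁅b (xIdx j), b (yIdx j)⁆ = b (Fin.last (2 * m)) := by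
  simp [lie_eq_form_smul hb]

theorem exists_apply_basis_last_eq_smul (hm : 0 < m) (ψ : LieDerivation R L L) :
    ∃ μ : R, ψ (b (Fin.last (2 * m))) = μ • b (Fin.last (2 * m)) := by
  let j : Fin m := ⟨0, hm⟩
  refine ⟨form b (b (xIdx j)) (ψ (b (yIdx j))) - form b (b (yIdx j)) (ψ (b (xIdx j))), ?_⟩
  conv_lhs => rw [← lie_basis_xIdx_yIdx hb j]
  rw [apply_lie_eq_sub, lie_eq_form_smul hb, lie_eq_form_smul hb, sub_smul]

theorem twoMap_add [CharP R 2] (lam : Fin (2 * m + 1) → R) (u v : L) :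
    twoMap b lam (u + v) = twoMap b lam u + twoMap b lam v + ⁅u, v⁆ := by
  rw [twoMap, quad_add, lie_eq_form_smul hb, add_smul, add_smul, twoMap, twoMap]

def derivationOfForm (D : L →ₗ[R] L) (c : R)
    (hD : D (b (Fin.last (2 * m))) = c • b (Fin.last (2 * m)))
    (hform : ∀ x y, form b (D x) y + form b x (D y) = c * form b x y) :
    LieDerivation R L L where
  toLinearMap := D
  leibniz' x y := by
    rw [lie_eq_form_smul hb, map_smul, hD, lie_eq_form_smul hb, lie_eq_form_smul hb, smul_smul,
      ← sub_smul, form_swap b (D x) y, sub_neg_eq_add, add_comm (form b x (D y)), hform, mul_comm]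

@[simp] theorem derivationOfForm_apply (D : L →ₗ[R] L) (c : R) (hD) (hform) (x : L) :
    derivationOfForm hb D c hD hform x = D x := rfl

noncomputable def derivXY (j : Fin m) : LieDerivation R L L :=
  derivationOfForm hb ((b.coord (xIdx j)).smulRight (b (yIdx j))) 0 (by simp)
    (fun x y => by simp; ring)

noncomputable def derivYX (j : Fin m) : LieDerivation R L L :=
  derivationOfForm hb ((b.coord (yIdx j)).smulRight (b (xIdx j))) 0 (by simp)
    (fun x y => by simp; ring)

noncomputable def derivProjYZ : LieDerivation R L L :=
  derivationOfForm hb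
    (∑ j : Fin m, (b.coord (yIdx j)).smulRight (b (yIdx j)) +
      (b.coord (Fin.last (2 * m))).smulRight (b (Fin.last (2 * m)))) 1
    (by simp [LinearMap.sum_apply])
    (fun x y => by
      simp [LinearMap.sum_apply, map_sum]
      rw [form_apply, Finset.sum_sub_distrib]
      simp only [mul_comm (b.repr y _)]
      ring)

variable (lam : Fin (2 * m + 1) → R)

theorem ind1_derivXY (j : Fin m) : ind1 R (twoMap b lam) (derivXY hb j) = -rho b (xIdx j) := by
  funext g
  simp [derivXY, twoMap, rho, lie_eq_form_smul hb, sq]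

theorem ind1_derivYX (j : Fin m) : ind1 R (twoMap b lam) (derivYX hb j) = rho b (yIdx j) := by
  funext g
  simp [derivYX, twoMap, rho, lie_eq_form_smul hb, sq]

theorem ind1_derivProjYZ : ind1 R (twoMap b lam) (derivProjYZ hb) = ∑ i, lam i • rho b i := by
  funext g
  simp [derivProjYZ, twoMap, rho, lie_eq_form_smul hb, smul_smul, LinearMap.sum_apply]
  rw [quad, ← sub_smul, ← Finset.sum_smul]
  congr 1
  simp only [mul_comm (lam _), mul_comm (b.repr g (yIdx _))]
  ring

theorem rho_mem_range_ind1 {i : Fin (2 * m + 1)} (hi : i ≠ Fin.last (2 * m)) :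
    rho b i ∈ LinearMap.range (ind1 R (twoMap b lam)) := by
  rcases idx_cases i with ⟨j, rfl⟩ | ⟨j, rfl⟩ | rfl
  · exact neg_neg (rho b (xIdx j)) ▸ neg_mem ⟨derivXY hb j, ind1_derivXY hb lam j⟩
  · exact ⟨derivYX hb j, ind1_derivYX hb lam j⟩
  · exact absurd rfl hi

theorem ind1_eq_sum_smul_rho [CharP R 2] (ψ : LieDerivation R L L) {μ : R}
    (hμ : ψ (b (Fin.last (2 * m))) = μ • b (Fin.last (2 * m))) :
    ind1 R (twoMap b lam) ψ = ∑ i, (lam i * μ - form b (b i) (ψ (b i))) • rho b i := by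
  funext g
  rw [b.eq_sum_repr_sq_smul (ind1_apply_add (twoMap_add hb lam) ψ)
    (ind1_apply_smul (twoMap_smul b lam) ψ) g, Finset.sum_apply]
  refine Finset.sum_congr rfl fun i _ => ?_
  simp only [ind1_apply, twoMap, quad_basis, map_smul, hμ, lie_eq_form_smul hb, Pi.smul_apply,
    rho]
  module

theorem ind1_mem_span [CharP R 2] (hm : 0 < m) (ψ : LieDerivation R L L) :
    ind1 R (twoMap b lam) ψ ∈
      span R (insert (lam (Fin.last (2 * m)) • rho b (Fin.last (2 * m)))
        (Set.range (rho b ∘ Fin.castSucc))) := by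
  obtain ⟨μ, hμ⟩ := exists_apply_basis_last_eq_smul hb hm ψ
  rw [ind1_eq_sum_smul_rho hb lam ψ hμ, Fin.sum_univ_castSucc, form_basis_last_left, sub_zero,
    mul_comm (lam _) μ, mul_smul]
  exact add_mem
    (sum_mem fun i _ => smul_mem _ _ (subset_span (Set.mem_insert_of_mem _ ⟨i, rfl⟩)))
    (smul_mem _ _ (subset_span (Set.mem_insert _ _)))

theorem range_ind1_twoMap [CharP R 2] (hm : 0 < m) :
    LinearMap.range (ind1 R (twoMap b lam)) =
      span R (insert (lam (Fin.last (2 * m)) • rho b (Fin.last (2 * m)))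
        (Set.range (rho b ∘ Fin.castSucc))) := by
  have hcast (i : Fin (2 * m)) : rho b i.castSucc ∈ LinearMap.range (ind1 R (twoMap b lam)) :=
    rho_mem_range_ind1 hb lam (Fin.castSucc_ne_last i)
  refine le_antisymm (by rintro _ ⟨ψ, rfl⟩; exact ind1_mem_span hb lam hm ψ) (span_le.mpr ?_)
  rintro _ (rfl | ⟨i, rfl⟩)
  · have hlast : lam (Fin.last (2 * m)) • rho b (Fin.last (2 * m)) =
        ind1 R (twoMap b lam) (derivProjYZ hb) -
          ∑ i : Fin (2 * m), lam i.castSucc • rho b i.castSucc := by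
      rw [ind1_derivProjYZ, Fin.sum_univ_castSucc, add_sub_cancel_left]
    rw [hlast]
    exact sub_mem (LinearMap.mem_range_self _ _) (sum_mem fun i _ => smul_mem _ _ (hcast i))
  · exact hcast i

end Heisenberg

/-- Let `F` be an algebraically closed field of characteristic `2`, let
`m ≥ 1`, and let `λ ∈ F^{2m+1}`, with associated `[2]`-map
`g^{[2]} = (Σ_i a_i² λ_i + Σ_{j=1}^m a_j a_{m+j}) e_{2m+1}` for `g = Σ_i a_i e_i`.  Then the
set of maps `{ g ↦ ψ(g^{[2]}) − [g, ψ(g)] : ψ a derivation of h_m }` is exactly the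
`F`-linear span of the maps `λ_{2m+1}·ρ_{2m+1}` and `ρ_1, …, ρ_{2m}`, where
`ρ_i(Σ_k a_k e_k) = a_i² e_{2m+1}`.  In particular this set is a subspace of dimension
`2m + 1` if `λ_{2m+1} ≠ 0` and of dimension `2m` if `λ_{2m+1} = 0`. -/
theorem heisenberg_ind1_image_char_two
    (F : Type*) [Field F] [CharP F 2]
    (m : ℕ) (hm : 1 ≤ m)
    (L : Type*) [LieRing L] [LieAlgebra F L]
    (b : Module.Basis (Fin (2*m+1)) F L)
    (hb : ∀ i j : Fin (2*m+1), ⁅b i, b j⁆ =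
      if (j : ℕ) = (i : ℕ) + m ∧ (i : ℕ) < m then b (Fin.last (2*m))
      else if (i : ℕ) = (j : ℕ) + m ∧ (j : ℕ) < m then - b (Fin.last (2*m))
      else 0)
    (lam : Fin (2*m+1) → F)
    (P : L → L)
    (hP : ∀ g : L, P g =
      (∑ i, (b.repr g i)^2 * lam i +
        ∑ j : Fin m, b.repr g ⟨(j : ℕ), by omega⟩ * b.repr g ⟨m + (j : ℕ), by omega⟩) •
      b (Fin.last (2*m)))
    (rho : Fin (2*m+1) → (L → L))
    (hrho : ∀ (i : Fin (2*m+1)) (g : L), rho i g = (b.repr g i)^2 • b (Fin.last (2*m))) :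
    {f : L → L | ∃ ψ : LieDerivation F L L, f = fun g => ψ (P g) - ⁅g, ψ g⁆} =
      ↑(Submodule.span F
        (insert (lam (Fin.last (2*m)) • rho (Fin.last (2*m)))
          {f : L → L | ∃ i : Fin (2*m+1), (i : ℕ) < 2*m ∧ f = rho i})) ∧
    (lam (Fin.last (2*m)) ≠ 0 →
      Module.finrank F ↥(Submodule.span F
        (insert (lam (Fin.last (2*m)) • rho (Fin.last (2*m)))
          {f : L → L | ∃ i : Fin (2*m+1), (i : ℕ) < 2*m ∧ f = rho i})) = 2*m + 1) ∧
    (lam (Fin.last (2*m)) = 0 →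
      Module.finrank F ↥(Submodule.span F
        (insert (lam (Fin.last (2*m)) • rho (Fin.last (2*m)))
          {f : L → L | ∃ i : Fin (2*m+1), (i : ℕ) < 2*m ∧ f = rho i})) = 2*m) := by
  classical
  obtain rfl : P = Heisenberg.twoMap b lam := funext hP
  obtain rfl : rho = Heisenberg.rho b := funext fun i => funext (hrho i)
  have himage : {f : L → L | ∃ ψ : LieDerivation F L L,
      f = fun g => ψ (Heisenberg.twoMap b lam g) - ⁅g, ψ g⁆} =
      LinearMap.range (ind1 F (Heisenberg.twoMap b lam)) :=
    Set.ext fun _ => exists_congr fun _ => eq_comm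
  rw [himage, Fin.setOf_val_lt_and_eq_eq_range_castSucc, Heisenberg.range_ind1_twoMap hb lam hm,
    (Heisenberg.linearIndependent_rho b).finrank_span_insert_smul_last]
  exact ⟨rfl, fun h => if_neg h, fun h => if_pos h⟩
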